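/- Assume γ is ℓ-periodic (γ(s+ℓ) = γ(s) for all s, ℓ > 0) and that |ρ_α'(s)| < cos α for all s. Then the length of the α-evolutoid equals cos α times the length of γ: ∫₀^ℓ √(⟨γ_α'(s), γ_α'(s)⟩_c) ds = cos(α)·ℓ. -/

import Mathlib

noncomputable section

open Real

/-- The bilinear form `⟨x,y⟩_c = c·x₁y₁ + x₂y₂ + x₃y₃` on `ℝ³`. -/
def ip (c : ℝ) (x y : ℝ × ℝ × ℝ) : ℝ :=
  c * x.1 * y.1 + x.2.1 * y.2.1 + x.2.2 * y.2.2

/-- The product `x ∧_c y = (c(x₂y₃ − x₃y₂), x₃y₁ − x₁y₃, x₁y₂ − x₂y₁)`. -/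
def wedge (c : ℝ) (x y : ℝ × ℝ × ℝ) : ℝ × ℝ × ℝ :=
  (c * (x.2.1 * y.2.2 - x.2.2 * y.2.1),
   x.2.2 * y.1 - x.1 * y.2.2,
   x.1 * y.2.1 - x.2.1 * y.1)

/-- `sin_c`: `sinh` when `c = -1`, `sin` when `c = 1`. -/
def sinc (c x : ℝ) : ℝ := if c = -1 then Real.sinh x else Real.sin x

/-- `cos_c`: `cosh` when `c = -1`, `cos` when `c = 1`. -/
def cosc (c x : ℝ) : ℝ := if c = -1 then Real.cosh x else Real.cos x

/-- `tan_c = sin_c / cos_c`. -/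
def tanc (c x : ℝ) : ℝ := sinc c x / cosc c x

/-- Inverse hyperbolic tangent. -/
def arctanh (x : ℝ) : ℝ := Real.log ((1 + x) / (1 - x)) / 2

/-- `arctan_c`: `arctanh` when `c = -1`, `arctan` when `c = 1`. -/
def arctanc (c x : ℝ) : ℝ := if c = -1 then arctanh x else Real.arctan x

namespace EvolAux

lemma prod3_ext {p q : ℝ × ℝ × ℝ} (h1 : p.1 = q.1) (h2 : p.2.1 = q.2.1)
    (h3 : p.2.2 = q.2.2) : p = q := by
  obtain ⟨a1, a2, a3⟩ := p; obtain ⟨b1, b2, b3⟩ := q; simp_all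

lemma hd_fst {f : ℝ → ℝ × ℝ × ℝ} {f' : ℝ × ℝ × ℝ} {s : ℝ} (hf : HasDerivAt f f' s) :
    HasDerivAt (fun τ => (f τ).1) f'.1 s :=
  (ContinuousLinearMap.fst ℝ ℝ (ℝ × ℝ)).hasFDerivAt.comp_hasDerivAt s hf

lemma hd_snd {f : ℝ → ℝ × ℝ × ℝ} {f' : ℝ × ℝ × ℝ} {s : ℝ} (hf : HasDerivAt f f' s) :
    HasDerivAt (fun τ => (f τ).2) f'.2 s :=
  (ContinuousLinearMap.snd ℝ ℝ (ℝ × ℝ)).hasFDerivAt.comp_hasDerivAt s hf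

lemma hd_21 {f : ℝ → ℝ × ℝ × ℝ} {f' : ℝ × ℝ × ℝ} {s : ℝ} (hf : HasDerivAt f f' s) :
    HasDerivAt (fun τ => (f τ).2.1) f'.2.1 s :=
  (ContinuousLinearMap.fst ℝ ℝ ℝ).hasFDerivAt.comp_hasDerivAt s (hd_snd hf)

lemma hd_22 {f : ℝ → ℝ × ℝ × ℝ} {f' : ℝ × ℝ × ℝ} {s : ℝ} (hf : HasDerivAt f f' s) :
    HasDerivAt (fun τ => (f τ).2.2) f'.2.2 s :=
  (ContinuousLinearMap.snd ℝ ℝ ℝ).hasFDerivAt.comp_hasDerivAt s (hd_snd hf)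

lemma hasDerivAt_ip (c : ℝ) {f g : ℝ → ℝ × ℝ × ℝ} {f' g' : ℝ × ℝ × ℝ} {s : ℝ}
    (hf : HasDerivAt f f' s) (hg : HasDerivAt g g' s) :
    HasDerivAt (fun τ => ip c (f τ) (g τ)) (ip c f' (g s) + ip c (f s) g') s := by
  have h := ((((hd_fst hf).const_mul c).mul (hd_fst hg)).add
      ((hd_21 hf).mul (hd_21 hg))).add ((hd_22 hf).mul (hd_22 hg))
  refine h.congr_deriv ?_
  simp only [ip]; ring

lemma hasDerivAt_wedge (c : ℝ) {f g : ℝ → ℝ × ℝ × ℝ} {f' g' : ℝ × ℝ × ℝ} {s : ℝ}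
    (hf : HasDerivAt f f' s) (hg : HasDerivAt g g' s) :
    HasDerivAt (fun τ => wedge c (f τ) (g τ)) (wedge c f' (g s) + wedge c (f s) g') s := by
  have h1 := (((hd_21 hf).mul (hd_22 hg)).sub ((hd_22 hf).mul (hd_21 hg))).const_mul c
  have h2 := ((hd_22 hf).mul (hd_fst hg)).sub ((hd_fst hf).mul (hd_22 hg))
  have h3 := ((hd_fst hf).mul (hd_21 hg)).sub ((hd_21 hf).mul (hd_fst hg))
  have h := h1.prodMk (h2.prodMk h3)
  refine h.congr_deriv ?_
  apply prod3_ext <;> (simp only [wedge, Prod.fst_add, Prod.snd_add]; ring)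

lemma continuous_ip (c : ℝ) {f g : ℝ → ℝ × ℝ × ℝ} (hf : Continuous f) (hg : Continuous g) :
    Continuous fun τ => ip c (f τ) (g τ) := by
  unfold ip; fun_prop

lemma continuous_wedge (c : ℝ) {f g : ℝ → ℝ × ℝ × ℝ} (hf : Continuous f) (hg : Continuous g) :
    Continuous fun τ => wedge c (f τ) (g τ) := by
  unfold wedge; fun_prop

lemma ip_comm (c : ℝ) (x y : ℝ × ℝ × ℝ) : ip c x y = ip c y x := by
  simp only [ip]; ring

lemma wedge_self (c : ℝ) (x : ℝ × ℝ × ℝ) : wedge c x x = 0 := by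
  apply prod3_ext <;> (simp only [wedge, Prod.fst_zero, Prod.snd_zero]; ring)

lemma ip_wedge_left (c : ℝ) (hc : c = -1 ∨ c = 1) (x y : ℝ × ℝ × ℝ) :
    ip c x (wedge c x y) = 0 := by
  rcases hc with rfl | rfl <;> (simp only [ip, wedge]; ring)

lemma ip_wedge_right (c : ℝ) (hc : c = -1 ∨ c = 1) (x y : ℝ × ℝ × ℝ) :
    ip c y (wedge c x y) = 0 := by
  rcases hc with rfl | rfl <;> (simp only [ip, wedge]; ring)

lemma ip_wedge_antisymm (c : ℝ) (hc : c = -1 ∨ c = 1) (x y z : ℝ × ℝ × ℝ) :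
    ip c y (wedge c x z) = - ip c z (wedge c x y) := by
  rcases hc with rfl | rfl <;> (simp only [ip, wedge]; ring)

lemma lagrange (c : ℝ) (hc : c = -1 ∨ c = 1) (x y z w : ℝ × ℝ × ℝ) :
    ip c (wedge c x y) (wedge c z w)
      = c * (ip c x z * ip c y w - ip c x w * ip c y z) := by
  rcases hc with rfl | rfl <;> (simp only [ip, wedge]; ring)

lemma gram (c : ℝ) (hc : c = -1 ∨ c = 1) (w x y : ℝ × ℝ × ℝ) :
    (ip c w (wedge c x y)) ^ 2
      = c * (ip c w w * (ip c x x * ip c y y - ip c x y ^ 2)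
          - ip c w x * (ip c w x * ip c y y - ip c x y * ip c w y)
          + ip c w y * (ip c w x * ip c x y - ip c x x * ip c w y)) := by
  rcases hc with rfl | rfl <;> (simp only [ip, wedge]; ring)

lemma ip5_expand (c A B D E F : ℝ) (x y z u w : ℝ × ℝ × ℝ) :
    ip c (A • x + B • y + D • z + E • u + F • w) (A • x + B • y + D • z + E • u + F • w)
      = A^2 * ip c x x + B^2 * ip c y y + D^2 * ip c z z + E^2 * ip c u u + F^2 * ip c w w
        + 2*A*B * ip c x y + 2*A*D * ip c x z + 2*A*E * ip c x u + 2*A*F * ip c x w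
        + 2*B*D * ip c y z + 2*B*E * ip c y u + 2*B*F * ip c y w
        + 2*D*E * ip c z u + 2*D*F * ip c z w + 2*E*F * ip c u w := by
  simp [ip, Prod.fst_add, Prod.snd_add, Prod.smul_fst, Prod.smul_snd, smul_eq_mul]
  ring

lemma cosc_sq (c : ℝ) (hc : c = -1 ∨ c = 1) (x : ℝ) :
    cosc c x ^ 2 + c * sinc c x ^ 2 = 1 := by
  rcases hc with rfl | rfl
  · simp only [cosc, _root_.sinc, if_pos rfl, if_true]
    linear_combination Real.cosh_sq_sub_sinh_sq x
  · have h1 : (1 : ℝ) ≠ -1 := by norm_num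
    simp only [cosc, _root_.sinc, if_neg h1]
    linear_combination Real.cos_sq_add_sin_sq x

lemma sin_arctan_eq (x : ℝ) : Real.sin (Real.arctan x) = x * Real.cos (Real.arctan x) := by
  have h := Real.tan_arctan x
  rw [Real.tan_eq_sin_div_cos] at h
  field_simp [(Real.cos_arctan_pos x).ne'] at h
  linarith [h]

lemma sinh_arctanh {x : ℝ} (h0 : -1 < x) (h1 : x < 1) :
    Real.sinh (arctanh x) = x * Real.cosh (arctanh x) := by
  have hy : 0 < (1 + x) / (1 - x) := div_pos (by linarith) (by linarith)
  rw [Real.sinh_eq, Real.cosh_eq, arctanh]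
  set tq := Real.log ((1 + x) / (1 - x)) / 2 with htq
  have hE : Real.exp tq ^ 2 = (1 + x) / (1 - x) := by
    rw [sq, ← Real.exp_add, htq]
    rw [show Real.log ((1+x)/(1-x)) / 2 + Real.log ((1+x)/(1-x)) / 2
        = Real.log ((1+x)/(1-x)) by ring]
    exact Real.exp_log hy
  have hEpos := Real.exp_pos tq
  rw [Real.exp_neg]
  have hx1 : (1 : ℝ) - x ≠ 0 := by linarith
  field_simp at hE ⊢
  nlinarith [hE, hEpos]

lemma sinc_arctanc (c : ℝ) (hc : c = -1 ∨ c = 1) {x : ℝ}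
    (hx : c = -1 → -1 < x ∧ x < 1) :
    sinc c (arctanc c x) = x * cosc c (arctanc c x) := by
  rcases hc with rfl | rfl
  · simp only [_root_.sinc, cosc, arctanc, if_pos rfl, if_true]
    exact sinh_arctanh (hx rfl).1 (hx rfl).2
  · have hne : (1 : ℝ) ≠ -1 := by norm_num
    simp only [_root_.sinc, cosc, arctanc, if_neg hne]
    exact sin_arctan_eq x


lemma hyp_deriv_eq (K κ b : ℝ) (hK : 0 < K) (h1 : 0 < 1 - b / K) (h2 : 0 < 1 + b / K) :
    -b * κ / (K ^ 2 + (-1) * b ^ 2)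
      = ((1 + b / K) / (1 - b / K))⁻¹ *
          ((-(b * κ) / K ^ 2 * (1 - b / K) - (1 + b / K) * -(-(b * κ) / K ^ 2)) /
            (1 - b / K) ^ 2) / 2 := by
  have hK' : K ≠ 0 := hK.ne'
  have h5 : K - b ≠ 0 := by
    intro hz; rw [sub_eq_zero] at hz; rw [← hz, div_self hK'] at h1; linarith
  have h6 : K + b ≠ 0 := by
    intro hz
    have hbk : b / K = -1 := by rw [div_eq_iff hK']; linarith
    rw [hbk] at h2; linarith
  rw [show K ^ 2 + (-1) * b ^ 2 = K^2 - b^2 by ring,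
    show 1 - b / K = (K - b)/K by field_simp,
    show 1 + b / K = (K + b)/K by field_simp]
  have h7 : -b ^ 2 + K ^ 2 ≠ 0 := by
    intro hz; exact (mul_ne_zero h6 h5) (by nlinarith)
  field_simp [h7]
  have h8 : K ^ 2 - b ^ 2 ≠ 0 := by intro hz; exact h7 (by linarith)
  rw [← neg_div, div_eq_iff h8]; ring

lemma tan_deriv_eq (K κ b : ℝ) (hK : 0 < K) :
    -b * κ / (K ^ 2 + 1 * b ^ 2)
      = 1 / (1 + (b / K) ^ 2) * (-(b * κ) / K ^ 2) := by
  have hK' : K ≠ 0 := hK.ne'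
  have h4 : K ^ 2 + b ^ 2 ≠ 0 := by positivity
  field_simp

lemma ip_main (c S C K a b r : ℝ) (x y z u w : ℝ × ℝ × ℝ)
    (hxx : ip c x x = c) (hyy : ip c y y = 1) (hzz : ip c z z = 1)
    (huu : ip c u u = c + K^2) (hww : ip c w w = K^2)
    (hxy : ip c x y = 0) (hxz : ip c x z = 0) (hxu : ip c x u = -1) (hxw : ip c x w = 0)
    (hyz : ip c y z = 0) (hyu : ip c y u = 0) (hyw : ip c y w = -K)
    (hzu : ip c z u = K) (hzw : ip c z w = 0) (huw : ip c u w = 0)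
    (hCS : C^2 + c*S^2 = 1) (hSk : S*K = b*C) (hab : a^2 + b^2 = 1) (hc2 : c^2 = 1) :
    ip c ((-(c * S * r)) • x + (C + C * r * a) • y + (C * r * b) • z
        + (S * a) • u + (S * b) • w)
      ((-(c * S * r)) • x + (C + C * r * a) • y + (C * r * b) • z
        + (S * a) • u + (S * b) • w) = (a + r)^2 := by
  rw [ip5_expand, hxx, hyy, hzz, huu, hww, hxy, hxz, hxu, hxw, hyz, hyu, hyw, hzu, hzw, huw]
  linear_combination ((a + r)^2) * hCS
    + ((a^2 + b^2) * (S*K - b*C)) * hSk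
    + (C^2*(a+r)^2 - 2*a*C^2*(a+r) + C^2*(a^2+b^2-1) + 2*b*C*(S*K - b*C)) * hab
    + (c * S^2 * r^2) * hc2

end EvolAux

open EvolAux

theorem evolutoid_length
    (c : ℝ) (hc : c ∈ ({-1, 1} : Set ℝ))
    (γ : ℝ → ℝ × ℝ × ℝ) (hγ : ContDiff ℝ (⊤ : ℕ∞) γ)
    (hγM : ∀ s, ip c (γ s) (γ s) = c)
    (hunit : ∀ s, ip c (deriv γ s) (deriv γ s) = 1)
    (t : ℝ → ℝ × ℝ × ℝ) (ht : t = deriv γ)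
    (e : ℝ → ℝ × ℝ × ℝ) (he : ∀ s, e s = wedge c (γ s) (t s))
    (k : ℝ → ℝ) (hk : ∀ s, k s = ip c (deriv (deriv γ) s) (e s))
    (α : ℝ) (hα : α ∈ Set.Icc 0 (Real.pi / 2))
    (a b : ℝ) (ha : a = Real.cos α) (hb : b = Real.sin α)
    (v : ℝ → ℝ × ℝ × ℝ) (hv : ∀ s, v s = a • t s + b • e s)
    (hconv₁ : c = 1 → ∀ s, 0 < k s) (hconv₂ : c = -1 → ∀ s, 1 < k s)
    (ρ : ℝ → ℝ) (hρ : ∀ s, ρ s = arctanc c (b / k s))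
    (γα : ℝ → ℝ × ℝ × ℝ)
    (hγα : ∀ s, γα s = cosc c (ρ s) • γ s + sinc c (ρ s) • v s)
    (ℓ : ℝ) (hℓ : 0 < ℓ) (hper : ∀ s, γ (s + ℓ) = γ s)
    (hsmall : ∀ s, |deriv ρ s| < Real.cos α) :
    ∫ s in (0 : ℝ)..ℓ, Real.sqrt (ip c (deriv γα s) (deriv γα s)) =
      Real.cos α * ℓ := by
  classical
  have hcd : c = -1 ∨ c = 1 := by
    rcases hc with h | h
    · exact Or.inl h
    · exact Or.inr h
  have hc2 : c ^ 2 = 1 := by rcases hcd with rfl | rfl <;> norm_num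
  -- smoothness chain
  have hγs : ContDiff ℝ ((⊤ : ℕ∞) : WithTop ℕ∞) γ := hγ.of_le (by simp)
  have hγdiff : Differentiable ℝ γ := hγs.differentiable (by simp)
  have htCD : ContDiff ℝ ((⊤ : ℕ∞) : WithTop ℕ∞) (deriv γ) := (contDiff_infty_iff_deriv.mp hγs).2
  have htCD' : ContDiff ℝ ((⊤ : ℕ∞) : WithTop ℕ∞) t := by rw [ht]; exact htCD
  have htdiff : Differentiable ℝ t := htCD'.differentiable (by simp)
  set u : ℝ → ℝ × ℝ × ℝ := deriv t with hu_def
  have huCD : ContDiff ℝ ((⊤ : ℕ∞) : WithTop ℕ∞) u := (contDiff_infty_iff_deriv.mp htCD').2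
  have hudiff : Differentiable ℝ u := huCD.differentiable (by simp)
  have hduc : Continuous (deriv u) := ((contDiff_infty_iff_deriv.mp huCD).2).continuous
  -- basic HasDerivAt facts
  have hdγ : ∀ s, HasDerivAt γ (t s) s := by
    intro s; rw [ht]; exact (hγdiff s).hasDerivAt
  have hdt : ∀ s, HasDerivAt t (u s) s := fun s => (htdiff s).hasDerivAt
  have hdu : ∀ s, HasDerivAt u (deriv u s) s := fun s => (hudiff s).hasDerivAt
  -- helper for constant functions
  have hconstd : ∀ {f : ℝ → ℝ} {d cst : ℝ} {s : ℝ},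
      HasDerivAt f d s → (∀ x, f x = cst) → d = 0 := by
    intro f d cst s hf hfc
    have hfe : f = fun _ => cst := funext hfc
    rw [hfe] at hf
    exact hf.unique (hasDerivAt_const s cst)
  -- scalar Frenet relations
  have htt : ∀ s, ip c (t s) (t s) = 1 := by intro s; rw [ht]; exact hunit s
  have hγt : ∀ s, ip c (γ s) (t s) = 0 := by
    intro s
    have h0 := hconstd (hasDerivAt_ip c (hdγ s) (hdγ s)) hγM
    have hcm := ip_comm c (t s) (γ s)
    linarith [h0, hcm]
  have htu : ∀ s, ip c (t s) (u s) = 0 := by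
    intro s
    have h0 := hconstd (hasDerivAt_ip c (hdt s) (hdt s)) htt
    have hcm := ip_comm c (u s) (t s)
    linarith [h0, hcm]
  have hγu : ∀ s, ip c (γ s) (u s) = -1 := by
    intro s
    have h0 := hconstd (hasDerivAt_ip c (hdγ s) (hdt s)) hγt
    have h1 := htt s
    linarith [h0, h1]
  -- k in terms of u
  have hudd : deriv (deriv γ) = u := by rw [hu_def, ht]
  have hke : ∀ s, k s = ip c (u s) (e s) := by
    intro s; rw [hk s, hudd]
  -- inner product values involving e and ed := wedge γ u
  have hγe : ∀ s, ip c (γ s) (e s) = 0 := by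
    intro s; rw [he s]; exact ip_wedge_left c hcd _ _
  have hte : ∀ s, ip c (t s) (e s) = 0 := by
    intro s; rw [he s]; exact ip_wedge_right c hcd _ _
  have heu : ∀ s, ip c (e s) (u s) = k s := by
    intro s; rw [ip_comm c (e s) (u s), ← hke s]
  have hee : ∀ s, ip c (e s) (e s) = 1 := by
    intro s
    rw [he s, lagrange c hcd, hγM s, htt s, hγt s, ip_comm c (t s) (γ s), hγt s]
    linear_combination hc2
  have huu : ∀ s, ip c (u s) (u s) = c + k s ^ 2 := by
    intro s
    have hg := gram c hcd (u s) (γ s) (t s)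
    rw [← he s] at hg
    rw [hγM s, htt s, hγt s] at hg
    have h1 : ip c (u s) (γ s) = -1 := by rw [ip_comm]; exact hγu s
    have h2 : ip c (u s) (t s) = 0 := by rw [ip_comm]; exact htu s
    rw [h1, h2, ← hke s] at hg
    linear_combination (-(ip c (u s) (u s))) * hc2 - hg
  have hγed : ∀ s, ip c (γ s) (wedge c (γ s) (u s)) = 0 :=
    fun s => ip_wedge_left c hcd _ _
  have hued : ∀ s, ip c (u s) (wedge c (γ s) (u s)) = 0 :=
    fun s => ip_wedge_right c hcd _ _
  have hted : ∀ s, ip c (t s) (wedge c (γ s) (u s)) = -(k s) := by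
    intro s
    rw [ip_wedge_antisymm c hcd (γ s) (t s) (u s), ← he s, ← hke s]
  have heed : ∀ s, ip c (e s) (wedge c (γ s) (u s)) = 0 := by
    intro s
    rw [he s, lagrange c hcd, hγM s, htu s, hγu s, ip_comm c (t s) (γ s), hγt s]
    ring
  have heded : ∀ s, ip c (wedge c (γ s) (u s)) (wedge c (γ s) (u s)) = k s ^ 2 := by
    intro s
    rw [lagrange c hcd, hγM s, huu s, hγu s, ip_comm c (u s) (γ s), hγu s]
    linear_combination (c + k s ^ 2) * hc2
  -- derivative of e
  have hefun : e = fun τ => wedge c (γ τ) (t τ) := funext he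
  have hde : ∀ s, HasDerivAt e (wedge c (γ s) (u s)) s := by
    intro s
    have h := hasDerivAt_wedge c (hdγ s) (hdt s)
    rw [hefun]
    simpa [wedge_self] using h
  -- derivative of k
  have hkfun : k = fun τ => ip c (u τ) (e τ) := funext hke
  set kd : ℝ → ℝ :=
    fun τ => ip c (deriv u τ) (e τ) + ip c (u τ) (wedge c (γ τ) (u τ)) with hkd_def
  have hdk : ∀ s, HasDerivAt k (kd s) s := by
    intro s
    rw [hkfun]
    exact hasDerivAt_ip c (hdu s) (hde s)
  -- continuity
  have hγc : Continuous γ := hγs.continuous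
  have htc : Continuous t := htdiff.continuous
  have huc : Continuous u := hudiff.continuous
  have hec : Continuous e := by rw [hefun]; exact continuous_wedge c hγc htc
  have hedc : Continuous (fun τ => wedge c (γ τ) (u τ)) := continuous_wedge c hγc huc
  have hkdc : Continuous kd := (continuous_ip c hduc hec).add (continuous_ip c huc hedc)
  have hkc : Continuous k := by rw [hkfun]; exact continuous_ip c huc hec
  -- positivity facts
  have hkpos : ∀ s, 0 < k s := by
    intro s
    rcases hcd with h | h
    · exact lt_trans one_pos (hconv₂ h s)
    · exact hconv₁ h s
  have hb0 : 0 ≤ b := by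
    rw [hb]
    exact Real.sin_nonneg_of_nonneg_of_le_pi hα.1 (hα.2.trans (by linarith [Real.pi_pos]))
  have hb1 : b ≤ 1 := by rw [hb]; exact Real.sin_le_one α
  have hab : a ^ 2 + b ^ 2 = 1 := by rw [ha, hb]; exact Real.cos_sq_add_sin_sq α
  have hden : ∀ s, 0 < k s ^ 2 + c * b ^ 2 := by
    intro s
    rcases hcd with rfl | rfl
    · have h1 := hconv₂ rfl s; nlinarith [hb0, hb1]
    · have h1 := hconv₁ rfl s; nlinarith [sq_nonneg b]
  -- derivative of ρ
  set ρd : ℝ → ℝ := fun τ => -b * kd τ / (k τ ^ 2 + c * b ^ 2) with hρd_def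
  have hρdc : Continuous ρd := by
    rw [hρd_def]
    exact (continuous_const.mul hkdc).div ((hkc.pow 2).add continuous_const)
      (fun s => (hden s).ne')
  have hρfun : ρ = fun τ => arctanc c (b / k τ) := funext hρ
  have hdρ : ∀ s, HasDerivAt ρ (ρd s) s := by
    intro s
    have hq : HasDerivAt (fun τ => b / k τ) (-(b * kd s) / k s ^ 2) s := by
      have h := (hasDerivAt_const s b).div (hdk s) (hkpos s).ne'
      refine h.congr_deriv ?_
      ring
    rcases hcd with hcm | hcp
    · -- hyperbolic case
      have hq1 : b / k s < 1 := (div_lt_one (hkpos s)).mpr (hb1.trans_lt (hconv₂ hcm s))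
      have hq0 : 0 ≤ b / k s := div_nonneg hb0 (hkpos s).le
      have h1p : 0 < 1 + b / k s := by linarith
      have h1m : 0 < 1 - b / k s := by linarith
      have hnum : HasDerivAt (fun τ => 1 + b / k τ) (-(b * kd s) / k s ^ 2) s := by
        exact ((hasDerivAt_const s (1:ℝ)).add hq).congr_deriv (by simp)
      have hden2 : HasDerivAt (fun τ => 1 - b / k τ) (-(-(b * kd s) / k s ^ 2)) s := by
        exact ((hasDerivAt_const s (1:ℝ)).sub hq).congr_deriv (by simp)
      have hw := hnum.div hden2 h1m.ne'
      have hwpos : 0 < (1 + b / k s) / (1 - b / k s) := div_pos h1p h1m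
      have hl := (Real.hasDerivAt_log hwpos.ne').comp s hw
      have hfin := hl.div_const 2
      have hρa : ρ = fun τ => Real.log ((1 + b / k τ) / (1 - b / k τ)) / 2 := by
        rw [hρfun]
        funext τ
        rw [hcm]; norm_num [arctanc, arctanh]
      rw [hρa]
      have hval : ρd s
          = ((1 + b / k s) / (1 - b / k s))⁻¹ *
              ((-(b * kd s) / k s ^ 2 * (1 - b / k s)
                  - (1 + b / k s) * -(-(b * kd s) / k s ^ 2)) /
                (1 - b / k s) ^ 2) / 2 := by
        have hrfl : ρd s = -b * kd s / (k s ^ 2 + c * b ^ 2) := rfl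
        rw [hrfl, hcm]
        exact hyp_deriv_eq (k s) (kd s) b (hkpos s) h1m h1p
      rw [hval]
      exact hfin
    · -- spherical case
      have harc := (Real.hasDerivAt_arctan (b / k s)).comp s hq
      have hρa : ρ = fun τ => Real.arctan (b / k τ) := by
        rw [hρfun]
        funext τ
        rw [hcp]; norm_num [arctanc]
      rw [hρa]
      have hval : ρd s
          = 1 / (1 + (b / k s) ^ 2) * (-(b * kd s) / k s ^ 2) := by
        have hrfl : ρd s = -b * kd s / (k s ^ 2 + c * b ^ 2) := rfl
        rw [hrfl, hcp]
        exact tan_deriv_eq (k s) (kd s) b (hkpos s)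
      rw [hval]
      exact harc
  have hρderiv : ∀ s, deriv ρ s = ρd s := fun s => (hdρ s).deriv
  have ha0 : 0 < a := by
    rw [ha]; exact lt_of_le_of_lt (abs_nonneg (deriv ρ 0)) (hsmall 0)
  have hsum : ∀ s, 0 < a + ρd s := by
    intro s
    have h := hsmall s
    rw [hρderiv s, ← ha] at h
    have h2 := abs_lt.mp h
    linarith [h2.1]
  -- trig relations at ρ s
  have hSk : ∀ s, sinc c (ρ s) * k s = b * cosc c (ρ s) := by
    intro s
    have hbd : c = -1 → -1 < b / k s ∧ b / k s < 1 := by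
      intro hcm
      have hq1 : b / k s < 1 := (div_lt_one (hkpos s)).mpr (hb1.trans_lt (hconv₂ hcm s))
      have hq0 : 0 ≤ b / k s := div_nonneg hb0 (hkpos s).le
      exact ⟨by linarith, hq1⟩
    have h := sinc_arctanc c hcd hbd
    rw [← hρ s] at h
    rw [h]
    field_simp [(hkpos s).ne']
  -- derivative of γα
  have hdcos : ∀ s, HasDerivAt (fun τ => cosc c (ρ τ)) (-(c * sinc c (ρ s) * ρd s)) s := by
    intro s
    rcases hcd with hcm | hcp
    · have h := (Real.hasDerivAt_cosh (ρ s)).comp s (hdρ s)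
      have he1 : (fun τ => cosc c (ρ τ)) = fun τ => Real.cosh (ρ τ) := by
        funext τ; rw [hcm]; norm_num [cosc]
      rw [he1]
      refine h.congr_deriv ?_
      rw [hcm]; norm_num [_root_.sinc]
    · have h := (Real.hasDerivAt_cos (ρ s)).comp s (hdρ s)
      have he1 : (fun τ => cosc c (ρ τ)) = fun τ => Real.cos (ρ τ) := by
        funext τ; rw [hcp]; norm_num [cosc]
      rw [he1]
      refine h.congr_deriv ?_
      rw [hcp]; norm_num [_root_.sinc]
  have hdsin : ∀ s, HasDerivAt (fun τ => sinc c (ρ τ)) (cosc c (ρ s) * ρd s) s := by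
    intro s
    rcases hcd with hcm | hcp
    · have h := (Real.hasDerivAt_sinh (ρ s)).comp s (hdρ s)
      have he1 : (fun τ => sinc c (ρ τ)) = fun τ => Real.sinh (ρ τ) := by
        funext τ; rw [hcm]; norm_num [_root_.sinc]
      rw [he1]
      refine h.congr_deriv ?_
      rw [hcm]; norm_num [cosc]
    · have h := (Real.hasDerivAt_sin (ρ s)).comp s (hdρ s)
      have he1 : (fun τ => sinc c (ρ τ)) = fun τ => Real.sin (ρ τ) := by
        funext τ; rw [hcp]; norm_num [_root_.sinc]
      rw [he1]
      refine h.congr_deriv ?_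
      rw [hcp]; norm_num [cosc]
  have hvfun : v = fun τ => a • t τ + b • e τ := funext hv
  have hdv : ∀ s, HasDerivAt v (a • u s + b • wedge c (γ s) (u s)) s := by
    intro s
    rw [hvfun]
    exact ((hdt s).const_smul a).add ((hde s).const_smul b)
  have hγαfun : γα = fun τ => cosc c (ρ τ) • γ τ + sinc c (ρ τ) • v τ := funext hγα
  have hdγα : ∀ s, HasDerivAt γα
      ((cosc c (ρ s) • t s + (-(c * sinc c (ρ s) * ρd s)) • γ s)
        + (sinc c (ρ s) • (a • u s + b • wedge c (γ s) (u s))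
            + (cosc c (ρ s) * ρd s) • v s)) s := by
    intro s
    rw [hγαfun]
    exact ((hdcos s).smul (hdγ s)).add ((hdsin s).smul (hdv s))
  have hderivγα : ∀ s, deriv γα s
      = (cosc c (ρ s) • t s + (-(c * sinc c (ρ s) * ρd s)) • γ s)
        + (sinc c (ρ s) • (a • u s + b • wedge c (γ s) (u s))
            + (cosc c (ρ s) * ρd s) • v s) := fun s => (hdγα s).deriv
  -- the pointwise norm computation
  have hip : ∀ s, ip c (deriv γα s) (deriv γα s) = (a + ρd s) ^ 2 := by
    intro s
    rw [hderivγα s]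
    have hD : (cosc c (ρ s) • t s + (-(c * sinc c (ρ s) * ρd s)) • γ s)
        + (sinc c (ρ s) • (a • u s + b • wedge c (γ s) (u s))
            + (cosc c (ρ s) * ρd s) • v s)
        = (-(c * sinc c (ρ s) * ρd s)) • γ s
          + (cosc c (ρ s) + cosc c (ρ s) * ρd s * a) • t s
          + (cosc c (ρ s) * ρd s * b) • e s
          + (sinc c (ρ s) * a) • u s
          + (sinc c (ρ s) * b) • wedge c (γ s) (u s) := by
      rw [hv s]
      module
    rw [hD]
    exact ip_main c (sinc c (ρ s)) (cosc c (ρ s)) (k s) a b (ρd s)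
      (γ s) (t s) (e s) (u s) (wedge c (γ s) (u s))
      (hγM s) (htt s) (hee s) (huu s) (heded s)
      (hγt s) (hγe s) (hγu s) (hγed s)
      (hte s) (htu s) (hted s)
      (heu s) (heed s) (hued s)
      (cosc_sq c hcd (ρ s)) (hSk s) hab hc2
  -- the integrand
  have hsqrt : ∀ s, Real.sqrt (ip c (deriv γα s) (deriv γα s)) = a + ρd s := by
    intro s
    rw [hip s]
    exact Real.sqrt_sq (hsum s).le
  -- periodicity
  have hper_t : ∀ s, t (s + ℓ) = t s := by
    intro s
    rw [ht]
    have hfun : (fun x => γ (x + ℓ)) = γ := funext hper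
    have h1 : deriv (fun x => γ (x + ℓ)) s = deriv γ (s + ℓ) := deriv_comp_add_const γ ℓ s
    rw [← h1, hfun]
  have hper_u : ∀ s, u (s + ℓ) = u s := by
    intro s
    rw [hu_def]
    have hfun : (fun x => t (x + ℓ)) = t := funext hper_t
    have h1 : deriv (fun x => t (x + ℓ)) s = deriv t (s + ℓ) := deriv_comp_add_const t ℓ s
    rw [← h1, hfun]
  have hρℓ : ρ ℓ = ρ 0 := by
    have h1 : γ ℓ = γ 0 := by have := hper 0; rwa [zero_add] at this
    have h2 : t ℓ = t 0 := by have := hper_t 0; rwa [zero_add] at this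
    have h3 : u ℓ = u 0 := by have := hper_u 0; rwa [zero_add] at this
    have hkℓ : k ℓ = k 0 := by
      rw [hke ℓ, hke 0, he ℓ, he 0, h1, h2, h3]
    rw [hρ ℓ, hρ 0, hkℓ]
  -- the integral
  have hFd : ∀ x ∈ Set.uIcc (0:ℝ) ℓ, HasDerivAt (fun τ => a * τ + ρ τ) (a + ρd x) x := by
    intro x _
    have h := ((hasDerivAt_id x).const_mul a).add (hdρ x)
    exact h.congr_deriv (by simp)
  have hint : IntervalIntegrable (fun s => a + ρd s) MeasureTheory.volume 0 ℓ :=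
    (continuous_const.add hρdc).intervalIntegrable 0 ℓ
  calc ∫ s in (0:ℝ)..ℓ, Real.sqrt (ip c (deriv γα s) (deriv γα s))
      = ∫ s in (0:ℝ)..ℓ, (a + ρd s) := by
        apply intervalIntegral.integral_congr
        intro x _
        exact hsqrt x
    _ = (a * ℓ + ρ ℓ) - (a * 0 + ρ 0) :=
        intervalIntegral.integral_eq_sub_of_hasDerivAt hFd hint
    _ = Real.cos α * ℓ := by rw [hρℓ, ← ha]; ring
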